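/- arXiv:2109.12620 — 2 statements merged into one kernel-verified Lean document; each statement's English description precedes it below -/
import Mathlib

section
/- Let S̄ = (S_0,…,S_n) and K̄ be n-slices of the finite group G, and let μ denote the Möbius function of the lattice of subgroups of G. Then the sum Σ |T_0| · μ(T_0,S_0)·μ(T_1,S_1)⋯μ(T_n,S_n) · m(K̄,T̄), taken over all (n+1)-tuples T̄ = (T_0,…,T_n) of subgroups of G satisfying T_0 ≤ S_0 ≤ T_1 ≤ S_1 ≤ ⋯ ≤ T_n ≤ S_n (each such T̄ is an n-slice), equals |N_G(S̄)| if K̄ is conjugate to S̄ in G, and equals 0 otherwise. -/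
variable {G : Type*}

/-- The conjugate slice `ᵍS̄ = (gS₀g⁻¹, …, gSₙg⁻¹)`. -/
def sliceConj [Group G] {n : ℕ} (g : G) (S : Fin (n + 1) → Subgroup G) :
    Fin (n + 1) → Subgroup G :=
  fun i => (S i).map (MulAut.conj g).toMonoidHom

/-- The mark `m(K̄,S̄) = |{gS₀ ∈ G/S₀ : g⁻¹Kᵢg ≤ Sᵢ for all i}|`. -/
noncomputable def mark [Group G] {n : ℕ} (K S : Fin (n + 1) → Subgroup G) : ℕ :=
  Nat.card {x : G ⧸ S 0 //
    ∃ g : G, QuotientGroup.mk g = x ∧ ∀ i, ∀ k ∈ K i, g⁻¹ * k * g ∈ S i}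

/-- The normalizer `N_G(S̄) = ⋂ᵢ N_G(Sᵢ)` of a slice. -/
def sliceNormalizer [Group G] {n : ℕ} (S : Fin (n + 1) → Subgroup G) : Subgroup G :=
  ⨅ i, Subgroup.normalizer (S i : Set G)

/-!
Since `T₀ ≤ Tᵢ`, the elements of the cosets counted by `m(K̄,T̄)` are exactly the `g` with
`g⁻¹K̄g ≤ T̄`, so `|T₀|·m(K̄,T̄)` counts those `g`. Exchanging the two sums, for fixed `g` the slices
`T̄` interlacing `S̄` above `M̄ = g⁻¹K̄g` form the box `∏ᵢ [Lᵢ, Sᵢ]` with `L₀ = M₀` and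
`Lᵢ₊₁ = Sᵢ ⊔ Mᵢ₊₁`, so the inner sum factors as `∏ᵢ ∑_{Lᵢ ≤ T ≤ Sᵢ} μ(T, Sᵢ) = [L̄ = S̄]`, and
`L̄ = S̄` iff `M̄ = S̄` because `M̄` is monotone. The total is the number of `g` with `g⁻¹K̄g = S̄`,
which is `|N_G(S̄)|` or `0`.
-/

open Finset IncidenceAlgebra

namespace IncidenceAlgebra

variable {𝕜 α : Type*} [AddCommGroup 𝕜] [One 𝕜] [PartialOrder α] [LocallyFiniteOrder α]
  [DecidableEq α]

theorem apply_eq_mu_of_sum_Icc_eq_zero {μ : α → α → 𝕜} (h_self : ∀ a, μ a a = 1)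
    (h_sum : ∀ a b, a < b → ∑ x ∈ Icc a b, μ a x = 0) {a b : α} (hab : a ≤ b) :
    μ a b = mu 𝕜 a b := by
  obtain rfl | hlt := hab.eq_or_lt
  · rw [h_self, mu_self]
  have h_rec : μ a b = -∑ x ∈ Ico a b, μ a x := by
    rw [eq_neg_iff_add_eq_zero, ← h_sum a b hlt, Icc_eq_cons_Ico hab, sum_cons, add_comm]
  rw [h_rec, mu_eq_neg_sum_Ico_of_ne hlt.ne]
  congr 1
  refine sum_congr rfl fun x hx => apply_eq_mu_of_sum_Icc_eq_zero h_self h_sum (mem_Ico.1 hx).1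
termination_by (Icc a b).card
decreasing_by
  exact card_lt_card (Icc_ssubset_Icc_right hab le_rfl (mem_Ico.1 hx).2)

end IncidenceAlgebra

section Slices

variable {α : Type*} {n : ℕ}

/-- `T₀ ≤ S₀ ≤ T₁ ≤ S₁ ≤ ⋯ ≤ Tₙ ≤ Sₙ`. -/
def Interlaces [Preorder α] (T S : Fin (n + 1) → α) : Prop :=
  (∀ i, T i ≤ S i) ∧ ∀ i : Fin n, S i.castSucc ≤ T i.succ

theorem Interlaces.monotone [Preorder α] {T S : Fin (n + 1) → α} (h : Interlaces T S) :
    Monotone T :=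
  Fin.monotone_iff_le_succ.2 fun i => (h.1 _).trans (h.2 i)

variable [Lattice α]

def interlaceFloor (S M : Fin (n + 1) → α) : Fin (n + 1) → α :=
  Fin.cases (M 0) fun i => S i.castSucc ⊔ M i.succ

@[simp]
theorem interlaceFloor_zero (S M : Fin (n + 1) → α) : interlaceFloor S M 0 = M 0 := rfl

@[simp]
theorem interlaceFloor_succ (S M : Fin (n + 1) → α) (i : Fin n) :
    interlaceFloor S M i.succ = S i.castSucc ⊔ M i.succ := rfl

theorem mem_piFinset_Icc_interlaceFloor [LocallyFiniteOrder α] {S M T : Fin (n + 1) → α} :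
    T ∈ Fintype.piFinset (fun i => Icc (interlaceFloor S M i) (S i)) ↔
      Interlaces T S ∧ M ≤ T := by
  simp only [Fintype.mem_piFinset, mem_Icc, Interlaces, Pi.le_def, forall_and]
  rw [Fin.forall_fin_succ (P := fun i => M i ≤ T i),
    Fin.forall_fin_succ (P := fun i => interlaceFloor S M i ≤ T i)]
  simp only [interlaceFloor_zero, interlaceFloor_succ, sup_le_iff, forall_and]
  tauto

theorem interlaceFloor_eq_iff {S M : Fin (n + 1) → α} (hM : Monotone M) :
    interlaceFloor S M = S ↔ M = S := by
  constructor
  · intro h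
    funext i
    induction i using Fin.induction with
    | zero => exact congrFun h 0
    | succ i ih =>
      rw [← congrFun h i.succ, interlaceFloor_succ, ← ih, sup_eq_right.2 (hM i.castSucc_le_succ)]
  · rintro rfl
    funext i
    cases i using Fin.cases with
    | zero => rfl
    | succ i => exact sup_eq_right.2 (hM i.castSucc_le_succ)

theorem sum_prod_mu_interlaceFloor (𝕜 : Type*) [CommRing 𝕜] [LocallyFiniteOrder α]
    [DecidableEq α] (S M : Fin (n + 1) → α) (hM : Monotone M) :
    ∑ T ∈ Fintype.piFinset (fun i => Icc (interlaceFloor S M i) (S i)), ∏ i, mu 𝕜 (T i) (S i) =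
      if M = S then 1 else 0 := by
  rw [← prod_univ_sum (fun i => Icc (interlaceFloor S M i) (S i)) fun i T => mu 𝕜 T (S i)]
  simp only [sum_Icc_mu_left, prod_boole, mem_univ, forall_const]
  exact if_congr (funext_iff.symm.trans (interlaceFloor_eq_iff hM)) rfl rfl

end Slices

section SliceConj

variable [Group G] {n : ℕ}

theorem sliceConj_mul (a b : G) (S : Fin (n + 1) → Subgroup G) :
    sliceConj (a * b) S = sliceConj a (sliceConj b S) := by
  funext i
  simp only [sliceConj, map_mul, Subgroup.map_map]
  rfl

theorem Monotone.sliceConj {K : Fin (n + 1) → Subgroup G} (hK : Monotone K) (g : G) :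
    Monotone (sliceConj g K) :=
  fun _ _ h => Subgroup.map_mono (hK h)

theorem sliceConj_eq_self_iff {g : G} {S : Fin (n + 1) → Subgroup G} :
    sliceConj g S = S ↔ g ∈ sliceNormalizer S := by
  simp only [sliceNormalizer, Subgroup.mem_iInf, Subgroup.mem_normalizer_iff_map_conj_eq,
    funext_iff, sliceConj]
  rfl

theorem sliceConj_inv_le_iff {g : G} {K T : Fin (n + 1) → Subgroup G} :
    sliceConj g⁻¹ K ≤ T ↔ ∀ i, ∀ k ∈ K i, g⁻¹ * k * g ∈ T i := by
  simp [Pi.le_def, sliceConj, SetLike.le_def]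

theorem card_mul_mark (K : Fin (n + 1) → Subgroup G) {T : Fin (n + 1) → Subgroup G}
    (hT : ∀ i, T 0 ≤ T i) :
    Nat.card (T 0) * mark K T = Nat.card {g : G // sliceConj g⁻¹ K ≤ T} := by
  set P : G → Prop := fun g => ∀ i, ∀ k ∈ K i, g⁻¹ * k * g ∈ T i
  have h_coset : ∀ g, ∀ t ∈ T 0, P g → P (g * t) := fun g t ht hg i k hk => by
    have : (g * t)⁻¹ * k * (g * t) = t⁻¹ * (g⁻¹ * k * g) * t := by group
    rw [this]
    exact mul_mem (mul_mem (inv_mem (hT i ht)) (hg i k hk)) (hT i ht)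
  have h_preimage : QuotientGroup.mk ⁻¹' {x : G ⧸ T 0 | ∃ g, QuotientGroup.mk g = x ∧ P g} =
      {g | P g} := by
    ext g
    refine ⟨fun ⟨g', hg', hPg'⟩ => ?_, fun hg => ⟨g, rfl, hg⟩⟩
    simpa using h_coset g' _ (QuotientGroup.eq.1 hg') hPg'
  calc Nat.card (T 0) * mark K T
      = Nat.card (QuotientGroup.mk ⁻¹' {x : G ⧸ T 0 | ∃ g, QuotientGroup.mk g = x ∧ P g}) :=
        (Nat.card_prod _ _).symm.trans
          (Nat.card_congr (QuotientGroup.preimageMkEquivSubgroupProdSet _ _).symm)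
    _ = Nat.card {g : G // sliceConj g⁻¹ K ≤ T} := by
        rw [h_preimage]
        exact Nat.card_congr (Equiv.subtypeEquivRight fun g => sliceConj_inv_le_iff.symm)

theorem card_sliceConj_inv_eq {K S : Fin (n + 1) → Subgroup G} {a : G} (ha : sliceConj a K = S) :
    Nat.card {g : G // sliceConj g⁻¹ K = S} = Nat.card (sliceNormalizer S) := by
  refine Nat.card_congr (((Equiv.inv G).trans (Equiv.mulRight a⁻¹)).subtypeEquiv fun g => ?_)
  rw [← sliceConj_eq_self_iff, Equiv.trans_apply, Equiv.inv_apply, Equiv.coe_mulRight, ← ha,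
    ← sliceConj_mul, inv_mul_cancel_right]

end SliceConj

theorem sum_card_mul_prod_mu_mul_mark [Group G] [Finite G] [LocallyFiniteOrder (Subgroup G)]
    [DecidableEq (Subgroup G)] {n : ℕ} {K : Fin (n + 1) → Subgroup G} (hK : Monotone K)
    (S : Fin (n + 1) → Subgroup G) :
    ∑ᶠ T ∈ {T | Interlaces T S},
        (Nat.card (T 0) : ℤ) * (∏ i, mu ℤ (T i) (S i)) * (mark K T : ℤ) =
      Nat.card {g : G // sliceConj g⁻¹ K = S} := by
  classical
  have : Fintype G := Fintype.ofFinite G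
  have : Fintype (Subgroup G) := Fintype.ofFinite _
  calc _ = ∑ T ∈ {T | Interlaces T S}.toFinset,
          ∑ g : G, if sliceConj g⁻¹ K ≤ T then ∏ i, mu ℤ (T i) (S i) else 0 := by
        rw [finsum_mem_eq_toFinset_sum]
        refine sum_congr rfl fun T hT => ?_
        have hT0 : ∀ i, T 0 ≤ T i := fun i => (Set.mem_toFinset.1 hT).monotone (Fin.zero_le i)
        rw [mul_right_comm, ← Nat.cast_mul, card_mul_mark K hT0, Nat.card_eq_fintype_card,
          Fintype.card_subtype, ← sum_boole, sum_mul]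
        simp only [boole_mul]
    _ = ∑ g : G, ∑ T ∈ Fintype.piFinset fun i => Icc (interlaceFloor S (sliceConj g⁻¹ K) i) (S i),
          ∏ i, mu ℤ (T i) (S i) := by
        rw [sum_comm]
        refine sum_congr rfl fun g _ => ?_
        rw [← sum_filter]
        congr 1
        ext T
        rw [mem_filter, Set.mem_toFinset, mem_piFinset_Icc_interlaceFloor]
        rfl
    _ = Nat.card {g : G // sliceConj g⁻¹ K = S} := by
        simp only [sum_prod_mu_interlaceFloor ℤ _ _ (hK.sliceConj _), sum_boole,
          Nat.card_eq_fintype_card, Fintype.card_subtype]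

theorem idempotent_orthogonality_general {n : ℕ} [Group G] [Finite G]
    (μ : Subgroup G → Subgroup G → ℤ)
    (hμ1 : ∀ H, μ H H = 1)
    (hμ3 : ∀ H K : Subgroup G, H < K →
      (∑ᶠ L ∈ {L : Subgroup G | H ≤ L ∧ L ≤ K}, μ H L) = 0)
    (S K : Fin (n + 1) → Subgroup G) (hK : Monotone K) :
    ((∃ g : G, sliceConj g K = S) →
      (∑ᶠ T ∈ {T : Fin (n + 1) → Subgroup G |
          (∀ i, T i ≤ S i) ∧ ∀ i : Fin n, S i.castSucc ≤ T i.succ},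
        (Nat.card (T 0) : ℤ) * (∏ i, μ (T i) (S i)) * (mark K T : ℤ)) =
        (Nat.card (sliceNormalizer S) : ℤ)) ∧
    (¬(∃ g : G, sliceConj g K = S) →
      (∑ᶠ T ∈ {T : Fin (n + 1) → Subgroup G |
          (∀ i, T i ≤ S i) ∧ ∀ i : Fin n, S i.castSucc ≤ T i.succ},
        (Nat.card (T 0) : ℤ) * (∏ i, μ (T i) (S i)) * (mark K T : ℤ)) = 0) := by
  classical
  let : LocallyFiniteOrder (Subgroup G) := .ofFiniteIcc fun _ _ => Set.toFinite _
  have hμ : ∀ H L : Subgroup G, H ≤ L → μ H L = mu ℤ H L := fun _ _ =>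
    apply_eq_mu_of_sum_Icc_eq_zero hμ1 fun H L hHL => by
      rw [← finsum_mem_coe_finset, coe_Icc]
      exact hμ3 H L hHL
  have h_sum : ∑ᶠ T ∈ {T | Interlaces T S},
        (Nat.card (T 0) : ℤ) * (∏ i, μ (T i) (S i)) * (mark K T : ℤ) =
      Nat.card {g : G // sliceConj g⁻¹ K = S} := by
    rw [← sum_card_mul_prod_mu_mul_mark hK S]
    refine finsum_mem_congr rfl fun T hT => ?_
    rw [prod_congr rfl fun i _ => hμ _ _ (hT.1 i)]
  refine ⟨fun ⟨a, ha⟩ => h_sum.trans (mod_cast card_sliceConj_inv_eq ha), fun h => h_sum.trans ?_⟩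
  have : IsEmpty {g : G // sliceConj g⁻¹ K = S} := ⟨fun g => h ⟨g.1⁻¹, g.2⟩⟩
  simp

/-- `Σ_{T₀ ≤ S₀ ≤ T₁ ≤ ⋯ ≤ Tₙ ≤ Sₙ} |T₀|·μ(T₀,S₀)⋯μ(Tₙ,Sₙ)·m(K̄,T̄)`
equals `|N_G(S̄)|` if `K̄` is conjugate to `S̄`, and `0` otherwise.  (`μ` is the
Möbius function of the subgroup lattice, characterized by its recurrence.) -/
theorem idempotent_orthogonality {n : ℕ} [Group G] [Finite G]
    (μ : Subgroup G → Subgroup G → ℤ)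
    (hμ1 : ∀ H, μ H H = 1)
    (hμ2 : ∀ H K : Subgroup G, ¬H ≤ K → μ H K = 0)
    (hμ3 : ∀ H K : Subgroup G, H < K →
      (∑ᶠ L ∈ {L : Subgroup G | H ≤ L ∧ L ≤ K}, μ H L) = 0)
    (S K : Fin (n + 1) → Subgroup G) (hS : Monotone S) (hK : Monotone K) :
    ((∃ g : G, sliceConj g K = S) →
      (∑ᶠ T ∈ {T : Fin (n + 1) → Subgroup G |
          (∀ i, T i ≤ S i) ∧ ∀ i : Fin n, S i.castSucc ≤ T i.succ},
        (Nat.card (T 0) : ℤ) * (∏ i, μ (T i) (S i)) * (mark K T : ℤ)) =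
        (Nat.card (sliceNormalizer S) : ℤ)) ∧
    (¬(∃ g : G, sliceConj g K = S) →
      (∑ᶠ T ∈ {T : Fin (n + 1) → Subgroup G |
          (∀ i, T i ≤ S i) ∧ ∀ i : Fin n, S i.castSucc ≤ T i.succ},
        (Nat.card (T 0) : ℤ) * (∏ i, μ (T i) (S i)) * (mark K T : ℤ)) = 0) :=
  idempotent_orthogonality_general μ hμ1 hμ3 S K hK
end

section
/- Let D be an integral domain and φ : B_n(G) → D a ring homomorphism, and set T(φ) = {S̄ ∈ [Π_n(G)] : φ(v_{S̄}) ≠ 0}. Then there exists exactly one K̄ ∈ [Π_n(G)] that is minimal in T(φ) with respect to the relation ⪯_G, and for this K̄ one has φ(x) = x_{K̄}·1_D for all x ∈ B_n(G), where x_{K̄} denotes the K̄-coordinate of x. -/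
variable {G : Type*}

/-- `T̄ ⪯_G S̄`: `T̄` is subconjugate to `S̄`. -/
def sliceLE [Group G] {n : ℕ} (T S : Fin (n + 1) → Subgroup G) : Prop :=
  ∃ g : G, ∀ i, T i ≤ sliceConj g S i

section Aux
variable [Group G] {n : ℕ}

lemma sliceConj_one (S : Fin (n + 1) → Subgroup G) : sliceConj (1 : G) S = S := by
  funext i
  ext x
  simp [sliceConj]

lemma mark_self_ne_zero [Finite G] (S : Fin (n + 1) → Subgroup G) : mark S S ≠ 0 := by
  have h : Nonempty {x : G ⧸ S 0 //
      ∃ g : G, QuotientGroup.mk g = x ∧ ∀ i, ∀ k ∈ S i, g⁻¹ * k * g ∈ S i} :=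
    ⟨⟨QuotientGroup.mk 1, 1, rfl, fun i k hk => by simpa using hk⟩⟩
  exact Nat.card_ne_zero.mpr ⟨h, inferInstance⟩

lemma sliceLE_of_mark_ne_zero {K S : Fin (n + 1) → Subgroup G} (h : mark K S ≠ 0) :
    sliceLE K S := by
  obtain ⟨⟨x, g, -, hg⟩, -⟩ := Nat.card_ne_zero.mp h
  refine ⟨g, fun i k hk => ?_⟩
  refine Subgroup.mem_map.mpr ⟨g⁻¹ * k * g, hg i k hk, ?_⟩
  simp only [MulEquiv.coe_toMonoidHom, MulAut.conj_apply]
  group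

lemma sliceLE_refl (S : Fin (n + 1) → Subgroup G) : sliceLE S S :=
  ⟨1, fun i => by simp [sliceConj_one]⟩

lemma sliceLE_trans {S T U : Fin (n + 1) → Subgroup G} (h1 : sliceLE S T) (h2 : sliceLE T U) :
    sliceLE S U := by
  obtain ⟨g, hg⟩ := h1
  obtain ⟨h, hh⟩ := h2
  refine ⟨g * h, fun i => (hg i).trans ?_⟩
  intro x hx
  obtain ⟨t, ht, rfl⟩ := Subgroup.mem_map.mp hx
  obtain ⟨u, hu, rfl⟩ := Subgroup.mem_map.mp (hh i ht)
  refine Subgroup.mem_map.mpr ⟨u, hu, ?_⟩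
  simp only [MulEquiv.coe_toMonoidHom, MulAut.conj_apply]
  group

lemma card_sliceConj [Finite G] (g : G) (H : Subgroup G) :
    Nat.card (H.map (MulAut.conj g).toMonoidHom) = Nat.card H :=
  (Nat.card_congr (H.equivMapOfInjective _ (MulAut.conj g).injective).toEquiv).symm

lemma sliceConj_eq_of_le_of_le [Finite G] {S T : Fin (n + 1) → Subgroup G} {g h : G}
    (hg : ∀ i, S i ≤ sliceConj g T i) (hh : ∀ i, T i ≤ sliceConj h S i) (i : Fin (n + 1)) :
    sliceConj g T i = S i := by
  have h2 : sliceConj g T i ≤ (sliceConj h S i).map (MulAut.conj g).toMonoidHom :=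
    Subgroup.map_mono (hh i)
  have hcard : Nat.card ((sliceConj h S i).map (MulAut.conj g).toMonoidHom)
      = Nat.card (S i) := by
    rw [card_sliceConj]
    exact card_sliceConj h (S i)
  have hA : Nat.card (sliceConj g T i) ≤ Nat.card (S i) := by
    rw [← hcard]
    exact Subgroup.card_le_of_le h2
  exact (Subgroup.eq_of_le_of_card_ge (hg i) hA).symm

end Aux

lemma exists_rel_maximal {α : Type*} [Fintype α] (r : α → α → Prop)
    (hrefl : ∀ a, r a a) (htrans : ∀ a b c, r a b → r b c → r a c)
    (hanti : ∀ a b, r a b → r b a → a = b)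
    (s : Set α) {a : α} (ha : a ∈ s) :
    ∃ b ∈ s, r a b ∧ ∀ c ∈ s, r b c → c = b := by
  classical
  suffices H : ∀ (N : ℕ) (a : α), a ∈ s →
      (Finset.univ.filter (fun x => x ∈ s ∧ r a x)).card ≤ N →
      ∃ b ∈ s, r a b ∧ ∀ c ∈ s, r b c → c = b from
    H (Finset.univ.filter (fun x => x ∈ s ∧ r a x)).card a ha le_rfl
  intro N
  induction N with
  | zero =>
    intro a ha hcard
    exfalso
    have hmem : a ∈ Finset.univ.filter (fun x => x ∈ s ∧ r a x) := by
      simp [ha, hrefl a]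
    have := Finset.card_pos.mpr ⟨a, hmem⟩
    omega
  | succ N ih =>
    intro a ha hcard
    by_cases hmax : ∀ c ∈ s, r a c → c = a
    · exact ⟨a, ha, hrefl a, hmax⟩
    · push_neg at hmax
      obtain ⟨c, hc, hac, hca⟩ := hmax
      have hsub : (Finset.univ.filter fun x => x ∈ s ∧ r c x)
          ⊆ (Finset.univ.filter fun x => x ∈ s ∧ r a x) := by
        intro x hx
        simp only [Finset.mem_filter, Finset.mem_univ, true_and] at hx ⊢
        exact ⟨hx.1, htrans a c x hac hx.2⟩
      have hmem : a ∈ Finset.univ.filter (fun x => x ∈ s ∧ r a x) := by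
        simp [ha, hrefl a]
      have hnmem : a ∉ Finset.univ.filter (fun x => x ∈ s ∧ r c x) := by
        simp only [Finset.mem_filter, Finset.mem_univ, true_and, not_and]
        intro _ hca'
        exact hca ((hanti a c hac hca').symm)
      have hss : (Finset.univ.filter fun x => x ∈ s ∧ r c x)
          ⊂ (Finset.univ.filter fun x => x ∈ s ∧ r a x) := by
        rw [Finset.ssubset_def]
        exact ⟨hsub, fun hsup => hnmem (hsup hmem)⟩
      have hlt := Finset.card_lt_card hss
      obtain ⟨b, hb, hcb, hbmax⟩ := ih c hc (by omega)
      exact ⟨b, hb, htrans a c b hac hcb, hbmax⟩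

/-- for a ring homomorphism `φ : B_n(G) → D` into an integral domain,
the set `T(φ) = {S̄ : φ(v_{S̄}) ≠ 0}` has exactly one minimal element `K̄` w.r.t.
`⪯_G`, and `φ(x) = x_{K̄}·1_D` for all `x`. -/
theorem hom_to_domain_eq_coordinate {n : ℕ} [Group G] [Finite G]
    (R : Finset {S : Fin (n + 1) → Subgroup G // Monotone S})
    (hR : ∀ S : {S : Fin (n + 1) → Subgroup G // Monotone S},
      ∃! T, T ∈ R ∧ ∃ g : G, sliceConj g S.1 = T.1)
    (B : Subring (R → ℤ))
    (hBv : ∀ S : R, (fun T : R => (mark T.1.1 S.1.1 : ℤ)) ∈ B)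
    (hBspan : ∀ x : B, (x : R → ℤ) ∈ Submodule.span ℤ
      (Set.range (fun S : R => fun T : R => (mark T.1.1 S.1.1 : ℤ))))
    (D : Type*) [CommRing D] [IsDomain D] (φ : B →+* D) :
    (∃! K : R,
      φ ⟨fun T : R => (mark T.1.1 K.1.1 : ℤ), hBv K⟩ ≠ 0 ∧
      ∀ S : R, φ ⟨fun T : R => (mark T.1.1 S.1.1 : ℤ), hBv S⟩ ≠ 0 →
        sliceLE S.1.1 K.1.1 → S = K) ∧
    (∀ K : R,
      (φ ⟨fun T : R => (mark T.1.1 K.1.1 : ℤ), hBv K⟩ ≠ 0 ∧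
        ∀ S : R, φ ⟨fun T : R => (mark T.1.1 S.1.1 : ℤ), hBv S⟩ ≠ 0 →
          sliceLE S.1.1 K.1.1 → S = K) →
      ∀ x : B, φ x = (((x : R → ℤ) K : ℤ) : D)) := by
  classical
  let vB : R → B := fun S => ⟨fun T : R => (mark T.1.1 S.1.1 : ℤ), hBv S⟩
  have r_refl : ∀ S : R, sliceLE S.1.1 S.1.1 := fun S => sliceLE_refl _
  have r_anti : ∀ S T : R, sliceLE S.1.1 T.1.1 → sliceLE T.1.1 S.1.1 → S = T := by
    rintro S T ⟨g, hg⟩ ⟨h, hh⟩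
    have heq : sliceConj g T.1.1 = S.1.1 := funext (sliceConj_eq_of_le_of_le hg hh)
    obtain ⟨U, _, hUuniq⟩ := hR T.1
    have h1 : S.1 = U := hUuniq S.1 ⟨S.2, g, heq⟩
    have h2 : T.1 = U := hUuniq T.1 ⟨T.2, 1, by rw [sliceConj_one]⟩
    exact Subtype.ext (h1.trans h2.symm)
  have hdecomp : ∀ x : B, ∃ c : R → ℤ, ∑ S : R, c S • ((vB S : B) : R → ℤ) = (x : R → ℤ) :=
    fun x => (Submodule.mem_span_range_iff_exists_fun ℤ).mp (hBspan x)
  have hφdecomp : ∀ (x : B) (c : R → ℤ),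
      (∑ S : R, c S • ((vB S : B) : R → ℤ)) = (x : R → ℤ) →
      φ x = ∑ S : R, c S • φ (vB S) := by
    intro x c hc
    have hxB : x = ∑ S : R, c S • vB S := by
      apply Subtype.ext
      rw [← hc]
      push_cast
      rfl
    rw [hxB, map_sum]
    exact Finset.sum_congr rfl fun S _ => map_zsmul φ _ _
  have hcoord : ∀ (c : R → ℤ) (T : R), (∑ S : R, c S • ((vB S : B) : R → ℤ)) T
      = ∑ S : R, c S * (mark T.1.1 S.1.1 : ℤ) := by
    intro c T
    simp [Finset.sum_apply, vB]
  have hsupp : ∀ (c : R → ℤ) (S : R), c S ≠ 0 →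
      ∃ T : R, (∑ U : R, c U • ((vB U : B) : R → ℤ)) T ≠ 0 ∧ sliceLE S.1.1 T.1.1 := by
    intro c S hcS
    obtain ⟨T, hT, hST, hTmax⟩ := exists_rel_maximal (fun a b : R => sliceLE a.1.1 b.1.1)
      r_refl (fun _ _ _ => sliceLE_trans) r_anti {U | c U ≠ 0} hcS
    refine ⟨T, ?_, hST⟩
    rw [hcoord, Finset.sum_eq_single T]
    · exact mul_ne_zero hT (by exact_mod_cast mark_self_ne_zero _)
    · intro U _ hUT
      by_cases hcU : c U = 0
      · simp [hcU]
      · by_cases hm : mark T.1.1 U.1.1 = 0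
        · simp [hm]
        · exact absurd (hTmax U hcU (sliceLE_of_mark_ne_zero hm)) hUT
    · exact fun h => absurd (Finset.mem_univ T) h
  have hTne : ∃ S : R, φ (vB S) ≠ 0 := by
    obtain ⟨c, hc⟩ := hdecomp 1
    have h1 : (1 : D) = ∑ S : R, c S • φ (vB S) := by
      rw [← map_one φ]
      exact hφdecomp 1 c hc
    by_contra h
    push_neg at h
    simp only [h, smul_zero, Finset.sum_const_zero] at h1
    exact one_ne_zero h1
  have hkey : ∀ K : R, (φ (vB K) ≠ 0 ∧ ∀ S, φ (vB S) ≠ 0 → sliceLE S.1.1 K.1.1 → S = K) →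
      ∀ x : B, φ x = (((x : R → ℤ) K : ℤ) : D) := by
    rintro K ⟨hK0, hKmin⟩ x
    obtain ⟨c, hc⟩ := hdecomp (x * vB K)
    have hcsupp : ∀ S : R, c S ≠ 0 → sliceLE S.1.1 K.1.1 := by
      intro S hcS
      obtain ⟨T, hT, hST⟩ := hsupp c S hcS
      rw [hc] at hT
      have hT' : (x : R → ℤ) T * (mark T.1.1 K.1.1 : ℤ) ≠ 0 := hT
      have hmT : mark T.1.1 K.1.1 ≠ 0 := by
        have := right_ne_zero_of_mul hT'
        exact_mod_cast this
      exact sliceLE_trans hST (sliceLE_of_mark_ne_zero hmT)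
    have hcK : c K = (x : R → ℤ) K := by
      have h1 : (∑ S : R, c S • ((vB S : B) : R → ℤ)) K
          = (x : R → ℤ) K * (mark K.1.1 K.1.1 : ℤ) := by
        rw [hc]; rfl
      rw [hcoord, Finset.sum_eq_single K] at h1
      · have hm : (mark K.1.1 K.1.1 : ℤ) ≠ 0 := by exact_mod_cast mark_self_ne_zero _
        exact mul_right_cancel₀ hm h1
      · intro S _ hSK
        by_cases hcS : c S = 0
        · simp [hcS]
        · by_cases hm : mark K.1.1 S.1.1 = 0
          · simp [hm]
          · exact absurd (r_anti S K (hcsupp S hcS) (sliceLE_of_mark_ne_zero hm)) hSK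
      · exact fun h => absurd (Finset.mem_univ K) h
    have hφx : φ (x * vB K) = c K • φ (vB K) := by
      rw [hφdecomp (x * vB K) c hc, Finset.sum_eq_single K]
      · intro S _ hSK
        by_cases hcS : c S = 0
        · simp [hcS]
        · have hz : φ (vB S) = 0 := by
            by_contra hne
            exact hSK (hKmin S hne (hcsupp S hcS))
          simp [hz]
      · exact fun h => absurd (Finset.mem_univ K) h
    have hfin : φ x * φ (vB K) = (((x : R → ℤ) K : ℤ) : D) * φ (vB K) := by
      rw [← map_mul, hφx, hcK, zsmul_eq_mul]
    exact mul_right_cancel₀ hK0 hfin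
  have hmin : ∃ K : R, φ (vB K) ≠ 0 ∧
      ∀ S, φ (vB S) ≠ 0 → sliceLE S.1.1 K.1.1 → S = K := by
    obtain ⟨S0, hS0⟩ := hTne
    obtain ⟨K, hK, -, hKmin⟩ := exists_rel_maximal (fun a b : R => sliceLE b.1.1 a.1.1)
      r_refl (fun _ _ _ hab hbc => sliceLE_trans hbc hab)
      (fun a b h1 h2 => r_anti a b h2 h1) {U | φ (vB U) ≠ 0} hS0
    exact ⟨K, hK, fun S hS hSK => hKmin S hS hSK⟩
  obtain ⟨K, hK⟩ := hmin
  refine ⟨⟨K, hK, ?_⟩, hkey⟩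
  intro K' hK'
  obtain ⟨c, hc⟩ := hdecomp (vB K * vB K')
  have hφy : φ (vB K * vB K') ≠ 0 := by
    rw [map_mul]
    exact mul_ne_zero hK.1 hK'.1
  have hex : ∃ S : R, c S ≠ 0 ∧ φ (vB S) ≠ 0 := by
    by_contra h
    push_neg at h
    apply hφy
    rw [hφdecomp _ c hc]
    apply Finset.sum_eq_zero
    intro S _
    by_cases hcS : c S = 0
    · simp [hcS]
    · simp [h S hcS]
  obtain ⟨S, hcS, hφS⟩ := hex
  have hSboth : sliceLE S.1.1 K.1.1 ∧ sliceLE S.1.1 K'.1.1 := by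
    obtain ⟨T, hT, hST⟩ := hsupp c S hcS
    rw [hc] at hT
    have hT' : (mark T.1.1 K.1.1 : ℤ) * (mark T.1.1 K'.1.1 : ℤ) ≠ 0 := hT
    constructor
    · exact sliceLE_trans hST
        (sliceLE_of_mark_ne_zero (by exact_mod_cast left_ne_zero_of_mul hT'))
    · exact sliceLE_trans hST
        (sliceLE_of_mark_ne_zero (by exact_mod_cast right_ne_zero_of_mul hT'))
  exact (hK'.2 S hφS hSboth.2).symm.trans (hK.2 S hφS hSboth.1)
end
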